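/- arXiv:1307.2720 — 3 statements merged into one kernel-verified Lean document; each statement's English description precedes it below -/
import Mathlib

section
/- Let α : ℝ → ℝ³ be a twice continuously differentiable unit-speed curve with unit tangent T(s) = α′(s), curvature κ(s) = ‖α″(s)‖ > 0, principal normal N(s) = α″(s)/κ(s), and binormal B(s) = T(s) × N(s). Let θ ∈ ℝ with 1 + 2 sin θ cos² θ > 0, and suppose a ∈ ℝ³ satisfies a = cos θ · T(s) + sin θ · B(s) for all s. For s₀ ∈ ℝ define ᾱ(s) = α(s₀) + sin θ · α(s) + (s − s₀) cos θ · a. Then the unit tangent of ᾱ satisfies, for every s, ᾱ′(s)/‖ᾱ′(s)‖ = [(sin θ + cos² θ) T(s) + sin θ cos θ · B(s)] / √(1 + 2 sin θ cos² θ). -/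
/-! Differentiating, ᾱ′ = sin θ · T + cos θ · a = (sin θ + cos² θ) T + sin θ cos θ · B.
A unit-speed curve has T ⟂ α″, so T and B = T × N are orthonormal, and therefore
‖ᾱ′‖² = (sin θ + cos² θ)² + sin² θ cos² θ = 1 + 2 sin θ cos² θ. -/

open Real

noncomputable def cross3 (u v : EuclideanSpace ℝ (Fin 3)) : EuclideanSpace ℝ (Fin 3) :=
  WithLp.toLp 2 ![u 1 * v 2 - u 2 * v 1, u 2 * v 0 - u 0 * v 2, u 0 * v 1 - u 1 * v 0]

open scoped RealInnerProductSpace Matrix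

theorem cross3_eq_crossProduct (u v : EuclideanSpace ℝ (Fin 3)) :
    cross3 u v = WithLp.toLp 2 (WithLp.ofLp u ⨯₃ WithLp.ofLp v) := by
  simp [cross3, cross_apply]

theorem inner_self_cross3 (u v : EuclideanSpace ℝ (Fin 3)) : ⟪u, cross3 u v⟫ = 0 := by
  rw [cross3_eq_crossProduct, EuclideanSpace.inner_eq_star_dotProduct, star_trivial,
    dotProduct_comm, dot_self_cross]

theorem inner_cross3_cross3 (u v : EuclideanSpace ℝ (Fin 3)) :
    ⟪cross3 u v, cross3 u v⟫ = ⟪u, u⟫ * ⟪v, v⟫ - ⟪u, v⟫ ^ 2 := by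
  simp only [cross3_eq_crossProduct, EuclideanSpace.inner_eq_star_dotProduct, star_trivial,
    cross_dot_cross]
  rw [dotProduct_comm (WithLp.ofLp u) (WithLp.ofLp v)]
  ring

theorem norm_cross3_of_orthonormal {u v : EuclideanSpace ℝ (Fin 3)} (hu : ‖u‖ = 1)
    (hv : ‖v‖ = 1) (huv : ⟪u, v⟫ = 0) : ‖cross3 u v‖ = 1 := by
  rw [← pow_eq_one_iff_of_nonneg (norm_nonneg _) two_ne_zero, ← real_inner_self_eq_norm_sq,
    inner_cross3_cross3, real_inner_self_eq_norm_sq, real_inner_self_eq_norm_sq, hu, hv, huv]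
  norm_num

section InnerProductSpace

variable {F : Type*} [NormedAddCommGroup F] [InnerProductSpace ℝ F]

theorem inner_deriv_eq_zero_of_norm_eq {f : ℝ → F} {r t : ℝ} (hf : DifferentiableAt ℝ f t)
    (hnorm : ∀ s, ‖f s‖ = r) : ⟪f t, deriv f t⟫ = 0 := by
  have h := hf.hasDerivAt.norm_sq
  simp only [hnorm] at h
  simpa using h.unique (hasDerivAt_const t (r ^ 2))

theorem norm_smul_add_smul_of_orthonormal {u v : F} (hu : ‖u‖ = 1) (hv : ‖v‖ = 1)
    (huv : ⟪u, v⟫ = 0) (a b : ℝ) : ‖a • u + b • v‖ = √(a ^ 2 + b ^ 2) := by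
  have horth : ⟪a • u, b • v⟫ = 0 := by simp [real_inner_smul_left, real_inner_smul_right, huv]
  rw [norm_add_eq_sqrt_iff_real_inner_eq_zero.2 horth]
  simp [norm_smul, hu, hv, sq]

end InnerProductSpace

theorem unit_tangent_of_associated_curve_general
    (α : ℝ → EuclideanSpace ℝ (Fin 3))
    (hα : ContDiff ℝ 2 α)
    (T N B : ℝ → EuclideanSpace ℝ (Fin 3)) (κ : ℝ → ℝ)
    (hT : ∀ s, T s = deriv α s)
    (hunit : ∀ s, ‖deriv α s‖ = 1)
    (hκ : ∀ s, κ s = ‖deriv (deriv α) s‖)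
    (hκpos : ∀ s, 0 < κ s)
    (hN : ∀ s, N s = (κ s)⁻¹ • deriv (deriv α) s)
    (hB : ∀ s, B s = cross3 (T s) (N s))
    (θ : ℝ)
    (a : EuclideanSpace ℝ (Fin 3))
    (ha : ∀ s, a = Real.cos θ • T s + Real.sin θ • B s)
    (s₀ : ℝ)
    (ᾱ : ℝ → EuclideanSpace ℝ (Fin 3))
    (hᾱ : ∀ s, ᾱ s = α s₀ + Real.sin θ • α s + ((s - s₀) * Real.cos θ) • a) :
    ∀ s, ‖deriv ᾱ s‖⁻¹ • deriv ᾱ s =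
      (Real.sqrt (1 + 2 * Real.sin θ * Real.cos θ ^ 2))⁻¹ •
        ((Real.sin θ + Real.cos θ ^ 2) • T s + (Real.sin θ * Real.cos θ) • B s) := by
  intro s
  have hT1 : ‖T s‖ = 1 := hT s ▸ hunit s
  have hN1 : ‖N s‖ = 1 := by
    rw [hN, norm_smul, norm_inv, norm_of_nonneg (hκpos s).le, ← hκ, inv_mul_cancel₀ (hκpos s).ne']
  have hTN : ⟪T s, N s⟫ = 0 := by
    have hα'' : Differentiable ℝ (deriv α) :=
      (hα.iterate_deriv' 1 1).differentiable one_ne_zero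
    rw [hT, hN, real_inner_smul_right, inner_deriv_eq_zero_of_norm_eq (hα'' s) hunit, mul_zero]
  have hTB : ⟪T s, B s⟫ = 0 := hB s ▸ inner_self_cross3 _ _
  have hB1 : ‖B s‖ = 1 := hB s ▸ norm_cross3_of_orthonormal hT1 hN1 hTN
  have hderiv : deriv ᾱ s = (sin θ + cos θ ^ 2) • T s + (sin θ * cos θ) • B s := by
    have hα' : HasDerivAt α (T s) s :=
      hT s ▸ (hα.differentiable (by norm_num) s).hasDerivAt
    have h : HasDerivAt (fun t ↦ α s₀ + sin θ • α t + ((t - s₀) * cos θ) • a)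
        (sin θ • T s + (1 * cos θ) • a) s :=
      ((hα'.const_smul (sin θ)).const_add (α s₀)).add
        ((((hasDerivAt_id s).sub_const s₀).mul_const (cos θ)).smul_const a)
    rw [funext hᾱ, h.deriv, ha s]
    module
  have hsq : (sin θ + cos θ ^ 2) ^ 2 + (sin θ * cos θ) ^ 2 = 1 + 2 * sin θ * cos θ ^ 2 := by
    linear_combination (cos θ ^ 2 + 1) * sin_sq_add_cos_sq θ
  rw [hderiv, norm_smul_add_smul_of_orthonormal hT1 hB1 hTB, hsq]

theorem unit_tangent_of_associated_curve
    (α : ℝ → EuclideanSpace ℝ (Fin 3))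
    (hα : ContDiff ℝ 2 α)
    (T N B : ℝ → EuclideanSpace ℝ (Fin 3)) (κ : ℝ → ℝ)
    (hT : ∀ s, T s = deriv α s)
    (hunit : ∀ s, ‖deriv α s‖ = 1)
    (hκ : ∀ s, κ s = ‖deriv (deriv α) s‖)
    (hκpos : ∀ s, 0 < κ s)
    (hN : ∀ s, N s = (κ s)⁻¹ • deriv (deriv α) s)
    (hB : ∀ s, B s = cross3 (T s) (N s))
    (θ : ℝ)
    (hθ : 0 < 1 + 2 * Real.sin θ * Real.cos θ ^ 2)
    (a : EuclideanSpace ℝ (Fin 3))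
    (ha : ∀ s, a = Real.cos θ • T s + Real.sin θ • B s)
    (s₀ : ℝ)
    (ᾱ : ℝ → EuclideanSpace ℝ (Fin 3))
    (hᾱ : ∀ s, ᾱ s = α s₀ + Real.sin θ • α s + ((s - s₀) * Real.cos θ) • a) :
    ∀ s, ‖deriv ᾱ s‖⁻¹ • deriv ᾱ s =
      (Real.sqrt (1 + 2 * Real.sin θ * Real.cos θ ^ 2))⁻¹ •
        ((Real.sin θ + Real.cos θ ^ 2) • T s + (Real.sin θ * Real.cos θ) • B s) :=
  unit_tangent_of_associated_curve_general α hα T N B κ hT hunit hκ hκpos hN hB θ a ha s₀ ᾱ hᾱ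
end

section
/- (Theorem 1) Let α : ℝ → ℝ³ be a twice continuously differentiable unit-speed general helix: there is a unit vector a and an angle θ ∈ ℝ with ⟪a, α′(s)⟫ = cos θ for all s, and assume 1 + 2 sin θ cos² θ > 0. For s₀ ∈ ℝ define ᾱ(s) = α(s₀) + sin θ · α(s) + (s − s₀) cos θ · a. Then ᾱ is also a general helix with axis a: for every s, ⟪a, ᾱ′(s)/‖ᾱ′(s)‖⟫ = cos θ (1 + sin θ)/√(1 + 2 sin θ cos² θ), a constant independent of s. -/
/-!
Differentiating, `ᾱ' = sin θ • α' + cos θ • a`. Since `α'` and `a` are unit vectors with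
`⟪a, α'⟫ = cos θ`, this vector has inner product `cos θ (1 + sin θ)` with `a` and squared norm
`sin² θ + 2 sin θ cos² θ + cos² θ = 1 + 2 sin θ cos² θ`, both independent of `s`.
-/

open Real RealInnerProductSpace

theorem hasDerivAt_const_add_smul_add_smul {E : Type*} [NormedAddCommGroup E] [NormedSpace ℝ E]
    {α : ℝ → E} {s : ℝ} (hα : DifferentiableAt ℝ α s) (p v : E) (c d t₀ : ℝ) :
    HasDerivAt (fun t => p + c • α t + ((t - t₀) * d) • v) (c • deriv α s + d • v) s := by
  have hline : HasDerivAt (fun t : ℝ => (t - t₀) * d) d s := by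
    simpa using ((hasDerivAt_id s).sub_const t₀).mul_const d
  simpa [add_assoc] using ((hα.hasDerivAt.const_smul c).add (hline.smul_const v)).const_add p

section UnitVectors

variable {F : Type*} [NormedAddCommGroup F] [InnerProductSpace ℝ F] {u a : F}

theorem inner_smul_add_smul_of_norm_eq_one (ha : ‖a‖ = 1) (x y : ℝ) :
    ⟪a, x • u + y • a⟫ = x * ⟪a, u⟫ + y := by
  rw [inner_add_right, real_inner_smul_right, real_inner_smul_right, real_inner_self_eq_norm_sq,
    ha, one_pow, mul_one]

theorem norm_sin_smul_add_cos_smul (hu : ‖u‖ = 1) (ha : ‖a‖ = 1) {θ : ℝ}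
    (hua : ⟪a, u⟫ = cos θ) :
    ‖sin θ • u + cos θ • a‖ = √(1 + 2 * sin θ * cos θ ^ 2) := by
  have hsq : ‖sin θ • u + cos θ • a‖ ^ 2 = 1 + 2 * sin θ * cos θ ^ 2 := by
    rw [norm_add_sq_real, norm_smul, norm_smul, real_inner_smul_left, real_inner_smul_right,
      real_inner_comm, hua, hu, ha, mul_pow, mul_pow, norm_eq_abs, norm_eq_abs, sq_abs, sq_abs]
    linear_combination sin_sq_add_cos_sq θ
  rw [← hsq, sqrt_sq (norm_nonneg _)]

theorem inner_normalize_sin_smul_add_cos_smul (hu : ‖u‖ = 1) (ha : ‖a‖ = 1) {θ : ℝ}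
    (hua : ⟪a, u⟫ = cos θ) :
    ⟪a, ‖sin θ • u + cos θ • a‖⁻¹ • (sin θ • u + cos θ • a)⟫ =
      cos θ * (1 + sin θ) / √(1 + 2 * sin θ * cos θ ^ 2) := by
  rw [real_inner_smul_right, inner_smul_add_smul_of_norm_eq_one ha, hua,
    norm_sin_smul_add_cos_smul hu ha hua]
  ring

end UnitVectors

theorem associated_curve_is_general_helix_general
    (α : ℝ → EuclideanSpace ℝ (Fin 3))
    (hα : ContDiff ℝ 2 α)
    (hunit : ∀ s, ‖deriv α s‖ = 1)
    (a : EuclideanSpace ℝ (Fin 3)) (θ : ℝ)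
    (ha : ‖a‖ = 1)
    (haxis : ∀ s, ⟪a, deriv α s⟫ = Real.cos θ)
    (s₀ : ℝ)
    (ᾱ : ℝ → EuclideanSpace ℝ (Fin 3))
    (hᾱ : ∀ s, ᾱ s = α s₀ + Real.sin θ • α s + ((s - s₀) * Real.cos θ) • a) :
    ∀ s, ⟪a, ‖deriv ᾱ s‖⁻¹ • deriv ᾱ s⟫ =
      Real.cos θ * (1 + Real.sin θ) / Real.sqrt (1 + 2 * Real.sin θ * Real.cos θ ^ 2) := by
  intro s
  obtain rfl : ᾱ = fun t => α s₀ + sin θ • α t + ((t - s₀) * cos θ) • a := funext hᾱ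
  have hderiv : deriv (fun t => α s₀ + sin θ • α t + ((t - s₀) * cos θ) • a) s =
      sin θ • deriv α s + cos θ • a :=
    (hasDerivAt_const_add_smul_add_smul (hα.differentiable (by norm_num) s) _ _ _ _ _).deriv
  rw [hderiv]
  exact inner_normalize_sin_smul_add_cos_smul (hunit s) ha (haxis s)

theorem associated_curve_is_general_helix
    (α : ℝ → EuclideanSpace ℝ (Fin 3))
    (hα : ContDiff ℝ 2 α)
    (hunit : ∀ s, ‖deriv α s‖ = 1)
    (a : EuclideanSpace ℝ (Fin 3)) (θ : ℝ)
    (ha : ‖a‖ = 1)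
    (haxis : ∀ s, ⟪a, deriv α s⟫ = Real.cos θ)
    (hθ : 0 < 1 + 2 * Real.sin θ * Real.cos θ ^ 2)
    (s₀ : ℝ)
    (ᾱ : ℝ → EuclideanSpace ℝ (Fin 3))
    (hᾱ : ∀ s, ᾱ s = α s₀ + Real.sin θ • α s + ((s - s₀) * Real.cos θ) • a) :
    ∀ s, ⟪a, ‖deriv ᾱ s‖⁻¹ • deriv ᾱ s⟫ =
      Real.cos θ * (1 + Real.sin θ) / Real.sqrt (1 + 2 * Real.sin θ * Real.cos θ ^ 2) :=
  associated_curve_is_general_helix_general α hα hunit a θ ha haxis s₀ ᾱ hᾱ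
end

section
/- (Theorem 2: slant helix equivalence) Let α : ℝ → ℝ³ be a twice continuously differentiable unit-speed curve with unit tangent T(s) = α′(s), curvature κ(s) = ‖α″(s)‖ > 0, principal normal N(s) = α″(s)/κ(s), and binormal B(s) = T(s) × N(s). Let θ ∈ ℝ with sin θ > 0, and suppose a ∈ ℝ³ satisfies a = cos θ · T(s) + sin θ · B(s) for all s. For s₀ ∈ ℝ define ᾱ(s) = α(s₀) + sin θ · α(s) + (s − s₀) cos θ · a, with principal normal N̄(s) = B̄(s) × T̄(s), where T̄ = ᾱ′/‖ᾱ′‖ and B̄ = (ᾱ′ × ᾱ″)/‖ᾱ′ × ᾱ″‖. Then α is a slant helix if and only if ᾱ is a slant helix: for any fixed unit vector d ∈ ℝ³, the function s ↦ ⟪N(s), d⟫ is constant if and only if s ↦ ⟪N̄(s), d⟫ is constant. -/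
open Real RealInnerProductSpace

/-
Along a unit-speed curve with Frenet frame `T, N, B`, the associated curve has velocity
`sin θ • T + cos θ • a`, which lies in the `T`–`B` plane, and acceleration `sin θ • κ • N`.
For any regular curve whose acceleration is a positive multiple of a unit vector `n` orthogonal
to its velocity, `(v × w) × v` is a positive multiple of `n`, so its principal normal is `n`.
Hence `N̄ = N` pointwise and the two slant-helix conditions coincide.
-/

open Matrix WithLp

local notation "ℝ³" => EuclideanSpace ℝ (Fin 3)

lemma cross3_eq_crossProduct_s7 (u v : ℝ³) : cross3 u v = toLp 2 (ofLp u ⨯₃ ofLp v) := by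
  rw [cross_apply]; rfl

lemma real_inner_eq_dotProduct (x y : ℝ³) : ⟪x, y⟫ = ofLp x ⬝ᵥ ofLp y := by
  rw [EuclideanSpace.inner_eq_star_dotProduct, star_trivial, dotProduct_comm]

lemma cross3_smul_left (c : ℝ) (u v : ℝ³) : cross3 (c • u) v = c • cross3 u v := by
  simp [cross3_eq_crossProduct_s7]

lemma cross3_smul_right (c : ℝ) (u v : ℝ³) : cross3 u (c • v) = c • cross3 u v := by
  simp [cross3_eq_crossProduct_s7]

lemma inner_cross3_self_left (u v : ℝ³) : ⟪cross3 u v, u⟫ = 0 := by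
  rw [real_inner_comm]
  simp [real_inner_eq_dotProduct, cross3_eq_crossProduct_s7, dot_self_cross]

lemma inner_cross3_self_right (u v : ℝ³) : ⟪cross3 u v, v⟫ = 0 := by
  rw [real_inner_comm]
  simp [real_inner_eq_dotProduct, cross3_eq_crossProduct_s7, dot_cross_self]

lemma cross3_cross3 (u v w : ℝ³) : cross3 (cross3 u v) w = ⟪u, w⟫ • v - ⟪v, w⟫ • u := by
  simp [real_inner_eq_dotProduct, cross3_eq_crossProduct_s7, cross_cross_eq_smul_sub_smul]

lemma norm_cross3_of_inner_eq_zero {u v : ℝ³} (h : ⟪u, v⟫ = 0) : ‖cross3 u v‖ = ‖u‖ * ‖v‖ := by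
  have hsq : ‖cross3 u v‖ ^ 2 = (‖u‖ * ‖v‖) ^ 2 := by
    rw [mul_pow, ← real_inner_self_eq_norm_sq, ← real_inner_self_eq_norm_sq,
      ← real_inner_self_eq_norm_sq]
    simp only [real_inner_eq_dotProduct, cross3_eq_crossProduct_s7, cross_dot_cross] at h ⊢
    rw [dotProduct_comm (ofLp v) (ofLp u), h]
    ring
  exact (sq_eq_sq₀ (norm_nonneg _) (by positivity)).mp hsq

/-- The principal normal `B̄ × T̄` of a regular curve with velocity `v` and acceleration `w`. -/
noncomputable def frenetNormal (v w : ℝ³) : ℝ³ :=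
  cross3 (‖cross3 v w‖⁻¹ • cross3 v w) (‖v‖⁻¹ • v)

lemma frenetNormal_smul_of_inner_eq_zero {v n : ℝ³} (hv : v ≠ 0) (hvn : ⟪v, n⟫ = 0)
    (hn : ‖n‖ = 1) {c : ℝ} (hc : 0 < c) : frenetNormal v (c • n) = n := by
  have hv' : ‖v‖ ≠ 0 := norm_ne_zero_iff.mpr hv
  rw [frenetNormal, cross3_smul_right c v n, norm_smul, norm_cross3_of_inner_eq_zero hvn, hn,
    Real.norm_of_nonneg hc.le, cross3_smul_left, cross3_smul_left, cross3_smul_right,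
    cross3_cross3, real_inner_self_eq_norm_sq, real_inner_comm, hvn, zero_smul, sub_zero,
    smul_smul, smul_smul, smul_smul]
  convert one_smul ℝ n using 2
  field_simp

lemma frenetNormal_sin_smul_add_cos_smul {t n : ℝ³} (ht : ‖t‖ = 1) (htn : ⟪t, n⟫ = 0)
    (hn : ‖n‖ = 1) {θ : ℝ} (hθ : 0 < sin θ) {c : ℝ} (hc : 0 < c) :
    frenetNormal (sin θ • t + cos θ • (cos θ • t + sin θ • cross3 t n)) (c • n) = n := by
  set v := sin θ • t + cos θ • (cos θ • t + sin θ • cross3 t n)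
  have hvt : ⟪v, t⟫ = sin θ + cos θ ^ 2 := by
    simp only [v, inner_add_left, real_inner_smul_left, real_inner_self_eq_norm_sq, ht,
      inner_cross3_self_left]
    ring
  have hvn : ⟪v, n⟫ = 0 := by
    simp only [v, inner_add_left, real_inner_smul_left, htn, inner_cross3_self_right]
    ring
  have hv : v ≠ 0 := fun h => by
    rw [h, inner_zero_left] at hvt
    nlinarith [sq_nonneg (cos θ)]
  exact frenetNormal_smul_of_inner_eq_zero hv hvn hn hc

section InnerProductSpace

variable {F : Type*} [NormedAddCommGroup F] [InnerProductSpace ℝ F]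

lemma inner_deriv_eq_zero_of_norm_eq_one {g : ℝ → F} (hg : ∀ t, ‖g t‖ = 1) {s : ℝ}
    (hd : DifferentiableAt ℝ g s) : ⟪g s, deriv g s⟫ = 0 := by
  have hconst : (‖g ·‖ ^ 2) = fun _ => (1 : ℝ) := funext fun t => by simp [hg t]
  have h := hd.hasDerivAt.norm_sq
  rw [hconst] at h
  linarith [h.unique (hasDerivAt_const s 1)]

lemma HasDerivAt.const_add_smul_add_smul {f : ℝ → F} {f' : F} {s : ℝ} (hf : HasDerivAt f f' s)
    (x a : F) (c r s₀ : ℝ) :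
    HasDerivAt (fun t => x + c • f t + ((t - s₀) * r) • a) (c • f' + r • a) s := by
  have hlin : HasDerivAt (fun t : ℝ => ((t - s₀) * r) • a) (r • a) s := by
    simpa using (((hasDerivAt_id s).sub_const s₀).mul_const r).smul_const a
  simpa [add_assoc] using ((hf.const_smul c).add hlin).const_add x
end InnerProductSpace

theorem slant_helix_iff_associated_slant_helix_general
    (α : ℝ → EuclideanSpace ℝ (Fin 3))
    (T N B : ℝ → EuclideanSpace ℝ (Fin 3)) (κ : ℝ → ℝ)
    (hT : ∀ s, T s = deriv α s)
    (hunit : ∀ s, ‖deriv α s‖ = 1)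
    (hκ : ∀ s, κ s = ‖deriv (deriv α) s‖)
    (hκpos : ∀ s, 0 < κ s)
    (hN : ∀ s, N s = (κ s)⁻¹ • deriv (deriv α) s)
    (hB : ∀ s, B s = cross3 (T s) (N s))
    (θ : ℝ) (hθ : 0 < Real.sin θ)
    (a : EuclideanSpace ℝ (Fin 3))
    (ha : ∀ s, a = Real.cos θ • T s + Real.sin θ • B s)
    (s₀ : ℝ)
    (ᾱ : ℝ → EuclideanSpace ℝ (Fin 3))
    (hᾱ : ∀ s, ᾱ s = α s₀ + Real.sin θ • α s + ((s - s₀) * Real.cos θ) • a)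
    (T' B' N' : ℝ → EuclideanSpace ℝ (Fin 3))
    (hT' : ∀ s, T' s = ‖deriv ᾱ s‖⁻¹ • deriv ᾱ s)
    (hB' : ∀ s, B' s = ‖cross3 (deriv ᾱ s) (deriv (deriv ᾱ) s)‖⁻¹ •
        cross3 (deriv ᾱ s) (deriv (deriv ᾱ) s))
    (hN' : ∀ s, N' s = cross3 (B' s) (T' s)) :
    ∀ d : EuclideanSpace ℝ (Fin 3), ‖d‖ = 1 →
      ((∃ c : ℝ, ∀ s, ⟪N s, d⟫ = c) ↔ (∃ c : ℝ, ∀ s, ⟪N' s, d⟫ = c)) := by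
  -- `deriv` vanishes off the points of differentiability.
  have hα : ∀ s, DifferentiableAt ℝ α s := fun s =>
    differentiableAt_of_deriv_ne_zero (norm_ne_zero_iff.mp (by simp [hunit s]))
  have hα' : ∀ s, DifferentiableAt ℝ (deriv α) s := fun s =>
    differentiableAt_of_deriv_ne_zero (norm_pos_iff.mp (hκ s ▸ hκpos s))
  have hv : deriv ᾱ = fun s => Real.sin θ • T s + Real.cos θ • a := funext fun s => by
    rw [funext hᾱ, hT]
    exact ((hα s).hasDerivAt.const_add_smul_add_smul _ a _ _ s₀).deriv
  have hacc : ∀ s, deriv (deriv ᾱ) s = (Real.sin θ * κ s) • N s := fun s => by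
    rw [hv, deriv_add_const, deriv_fun_const_smul_field, show T = deriv α from funext hT, hN s,
      mul_smul, smul_inv_smul₀ (hκpos s).ne']
  have hTN : ∀ s, ⟪T s, N s⟫ = 0 := fun s => by
    rw [hN, hT, real_inner_smul_right, inner_deriv_eq_zero_of_norm_eq_one hunit (hα' s), mul_zero]
  have hNunit : ∀ s, ‖N s‖ = 1 := fun s => by
    rw [hN, norm_smul, ← hκ, norm_inv, Real.norm_of_nonneg (hκpos s).le,
      inv_mul_cancel₀ (hκpos s).ne']
  have hN'N : ∀ s, N' s = N s := fun s => by
    rw [hN', hB', hT', hacc, hv, ha s, hB s]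
    exact frenetNormal_sin_smul_add_cos_smul (hT s ▸ hunit s) (hTN s) (hNunit s) hθ
      (mul_pos hθ (hκpos s))
  simp [hN'N]

theorem slant_helix_iff_associated_slant_helix
    (α : ℝ → EuclideanSpace ℝ (Fin 3))
    (hα : ContDiff ℝ 2 α)
    (T N B : ℝ → EuclideanSpace ℝ (Fin 3)) (κ : ℝ → ℝ)
    (hT : ∀ s, T s = deriv α s)
    (hunit : ∀ s, ‖deriv α s‖ = 1)
    (hκ : ∀ s, κ s = ‖deriv (deriv α) s‖)
    (hκpos : ∀ s, 0 < κ s)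
    (hN : ∀ s, N s = (κ s)⁻¹ • deriv (deriv α) s)
    (hB : ∀ s, B s = cross3 (T s) (N s))
    (θ : ℝ) (hθ : 0 < Real.sin θ)
    (a : EuclideanSpace ℝ (Fin 3))
    (ha : ∀ s, a = Real.cos θ • T s + Real.sin θ • B s)
    (s₀ : ℝ)
    (ᾱ : ℝ → EuclideanSpace ℝ (Fin 3))
    (hᾱ : ∀ s, ᾱ s = α s₀ + Real.sin θ • α s + ((s - s₀) * Real.cos θ) • a)
    (T' B' N' : ℝ → EuclideanSpace ℝ (Fin 3))
    (hT' : ∀ s, T' s = ‖deriv ᾱ s‖⁻¹ • deriv ᾱ s)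
    (hB' : ∀ s, B' s = ‖cross3 (deriv ᾱ s) (deriv (deriv ᾱ) s)‖⁻¹ •
        cross3 (deriv ᾱ s) (deriv (deriv ᾱ) s))
    (hN' : ∀ s, N' s = cross3 (B' s) (T' s)) :
    ∀ d : EuclideanSpace ℝ (Fin 3), ‖d‖ = 1 →
      ((∃ c : ℝ, ∀ s, ⟪N s, d⟫ = c) ↔ (∃ c : ℝ, ∀ s, ⟪N' s, d⟫ = c)) :=
  slant_helix_iff_associated_slant_helix_general α T N B κ hT hunit hκ hκpos hN hB θ hθ a ha s₀ ᾱ hᾱ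
    T' B' N' hT' hB' hN'
end
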